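/- arXiv:2306.13189 — 2 statements merged into one kernel-verified Lean document; each statement's English description precedes it below -/
import Mathlib

section
/- Suppose a_p ≠ 0, let λ ∈ ℂ, and suppose the polynomial P_p(·; λ) has p distinct roots z_1, …, z_p in ℂ, none of which equals 2 or −2. For each r = 1, …, p choose y_r ∈ ℂ \ {0} with y_r + y_r^{−1} = z_r (so y_r ≠ ±1). Then a sequence v : ℤ → ℂ satisfies (L_p v)_j + λ v_j = 0 for all j ∈ ℤ if and only if v is a linear combination of the 2p sequences (y_r^j)_{j∈ℤ} and (y_r^{−j})_{j∈ℤ}, r = 1, …, p. -/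
/-- Coefficients `b_r(λ)` of the characteristic polynomial `P_p(·;λ)` associated with the
symmetric finite difference stencil `a`. -/
noncomputable def bcoef (p : ℕ) (a : ℤ → ℝ) (lam : ℂ) (r : ℕ) : ℂ :=
  if r = 0 then
    ((a 0 : ℂ) + lam) + 2 * ∑ l ∈ Finset.Icc 1 (p / 2), (-1 : ℂ) ^ l * (a (2 * l) : ℂ)
  else if r % 2 = 0 then
    ∑ l ∈ Finset.Icc (r / 2) (p / 2),
      (-1 : ℂ) ^ (l - r / 2) * (Nat.choose (l + r / 2 - 1) (2 * (r / 2) - 1) : ℂ) *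
        ((l : ℂ) / ((r / 2 : ℕ) : ℂ)) * (a (2 * l) : ℂ)
  else
    ∑ l ∈ Finset.Icc (r / 2) ((p + 1) / 2 - 1),
      (-1 : ℂ) ^ (l - r / 2) * (Nat.choose (l + r / 2) (2 * (r / 2)) : ℂ) *
        ((2 * (l : ℂ) + 1) / (2 * ((r / 2 : ℕ) : ℂ) + 1)) * (a (2 * l + 1) : ℂ)

/-- The polynomial `P_p(z;λ) = Σ_{r=0}^p b_r(λ) z^r`. -/
noncomputable def Ppoly (p : ℕ) (a : ℤ → ℝ) (lam z : ℂ) : ℂ :=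
  ∑ r ∈ Finset.range (p + 1), bcoef p a lam r * z ^ r

/-!
Substituting `z = y + y⁻¹` turns `P_p(z; λ)` into the symbol `λ + Σ_{|t| ≤ p} a_t y^t` of the
difference operator: by symmetry of the stencil the symbol is `a_0 + λ + Σ_n a_n (y^n + y^{-n})`,
and `y^n + y^{-n}` is the Dickson polynomial `D_n(z)`, whose coefficients are exactly the binomial
expressions in `b_r`. So `y_r` and `y_r⁻¹` are roots of the symbol, and `j ↦ y_r^{±j}` are `2p`
distinct geometric solutions. By Vandermonde, a combination of them agrees with any given `v` on
the window `[-p, p)`; as `a_{±p} ≠ 0`, a solution vanishing on `2p` consecutive indices is zero.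
-/

open Finset Polynomial

def dicksonCoeffEven (L k : ℕ) : ℕ := (L + k).choose (2 * k) + (L + k - 1).choose (2 * k)

def dicksonCoeffOdd (L k : ℕ) : ℕ := (L + k + 1).choose (2 * k + 1) + (L + k).choose (2 * k + 1)

lemma dicksonCoeffEven_zero_right (L : ℕ) : dicksonCoeffEven L 0 = 2 := by
  simp [dicksonCoeffEven]

lemma dicksonCoeffEven_of_lt {L k : ℕ} (h : L < k) : dicksonCoeffEven L k = 0 := by
  simp only [dicksonCoeffEven, Nat.choose_eq_zero_of_lt (by omega : L + k < 2 * k),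
    Nat.choose_eq_zero_of_lt (by omega : L + k - 1 < 2 * k)]

lemma dicksonCoeffOdd_of_lt {L k : ℕ} (h : L < k) : dicksonCoeffOdd L k = 0 := by
  simp only [dicksonCoeffOdd, Nat.choose_eq_zero_of_lt (by omega : L + k + 1 < 2 * k + 1),
    Nat.choose_eq_zero_of_lt (by omega : L + k < 2 * k + 1)]

lemma dicksonCoeffOdd_zero_zero : dicksonCoeffOdd 0 0 = 1 := rfl

lemma dicksonCoeffEven_succ_succ (L k : ℕ) :
    dicksonCoeffEven (L + 1) (k + 1) = dicksonCoeffOdd L k + dicksonCoeffEven L (k + 1) := by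
  have h₁ := Nat.choose_succ_succ' (L + k + 1) (2 * k + 1)
  have h₂ := Nat.choose_succ_succ' (L + k) (2 * k + 1)
  simp only [dicksonCoeffEven, dicksonCoeffOdd, show L + 1 + (k + 1) = L + k + 1 + 1 by ring,
    show L + (k + 1) = L + k + 1 by ring, show 2 * (k + 1) = 2 * k + 1 + 1 by ring,
    Nat.add_sub_cancel] at h₁ h₂ ⊢
  omega

lemma dicksonCoeffOdd_succ (L k : ℕ) :
    dicksonCoeffOdd (L + 1) k = dicksonCoeffEven (L + 1) k + dicksonCoeffOdd L k := by
  have h₁ := Nat.choose_succ_succ' (L + k + 1) (2 * k)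
  have h₂ := Nat.choose_succ_succ' (L + k) (2 * k)
  simp only [dicksonCoeffEven, dicksonCoeffOdd, show L + 1 + k = L + k + 1 by ring,
    Nat.add_sub_cancel] at h₁ h₂ ⊢
  omega

lemma natCast_dicksonCoeffEven {l k : ℕ} (hk : 1 ≤ k) (hkl : k ≤ l) :
    ((l : ℂ) / k) * (l + k - 1).choose (2 * k - 1) = dicksonCoeffEven l k := by
  obtain ⟨k, rfl⟩ : ∃ m, k = m + 1 := ⟨k - 1, by omega⟩
  have pascal := Nat.choose_succ_succ (l + k) (2 * k + 1)
  have succ_right := Nat.choose_succ_right_eq (l + k) (2 * k + 1)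
  have hnat : l * (l + k).choose (2 * k + 1) = (k + 1) * dicksonCoeffEven l (k + 1) := by
    simp only [dicksonCoeffEven, show l + (k + 1) = l + k + 1 by ring,
      show 2 * (k + 1) = 2 * k + 1 + 1 by ring, Nat.add_sub_cancel, pascal]
    rw [show l + k - (2 * k + 1) = l - (k + 1) by omega] at succ_right
    obtain ⟨d, rfl⟩ : ∃ d, l = k + 1 + d := ⟨l - (k + 1), by omega⟩
    rw [show k + 1 + d - (k + 1) = d by omega] at succ_right
    nlinarith [succ_right]
  rw [show l + (k + 1) - 1 = l + k by omega, show 2 * (k + 1) - 1 = 2 * k + 1 by omega,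
    div_mul_eq_mul_div, div_eq_iff (Nat.cast_ne_zero.mpr (by omega))]
  exact_mod_cast hnat.trans (mul_comm _ _)

lemma natCast_dicksonCoeffOdd {l k : ℕ} (hkl : k ≤ l) :
    ((2 * l + 1 : ℂ) / (2 * k + 1)) * (l + k).choose (2 * k) = dicksonCoeffOdd l k := by
  have pascal := Nat.choose_succ_succ (l + k) (2 * k)
  have succ_right := Nat.choose_succ_right_eq (l + k) (2 * k)
  have hnat : (2 * l + 1) * (l + k).choose (2 * k) = (2 * k + 1) * dicksonCoeffOdd l k := by
    simp only [dicksonCoeffOdd, pascal]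
    obtain ⟨d, rfl⟩ : ∃ d, l = k + d := ⟨l - k, by omega⟩
    rw [show k + d + k - 2 * k = d by omega] at succ_right
    nlinarith [succ_right]
  rw [div_mul_eq_mul_div, div_eq_iff (by exact_mod_cast (by omega : 2 * k + 1 ≠ 0))]
  exact_mod_cast hnat.trans (mul_comm _ _)

local notation "D" => dickson 1 (1 : ℂ)

lemma dickson_two_mul_succ (L : ℕ) : D (2 * (L + 1)) = X * D (2 * L + 1) - D (2 * L) := by
  rw [show 2 * (L + 1) = 2 * L + 2 by ring, dickson_add_two, C_1, one_mul]

lemma dickson_two_mul_succ_add_one (L : ℕ) :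
    D (2 * (L + 1) + 1) = X * D (2 * (L + 1)) - D (2 * L + 1) := by
  rw [show 2 * (L + 1) + 1 = 2 * L + 1 + 2 by ring, show 2 * (L + 1) = 2 * L + 1 + 1 by ring,
    dickson_add_two, C_1, one_mul]

lemma coeff_dickson_one_one (L : ℕ) : ∀ k : ℕ,
    (D (2 * L)).coeff (2 * k) = (-1) ^ (L + k) * dicksonCoeffEven L k ∧
    (D (2 * L)).coeff (2 * k + 1) = 0 ∧
    (D (2 * L + 1)).coeff (2 * k) = 0 ∧
    (D (2 * L + 1)).coeff (2 * k + 1) = (-1) ^ (L + k) * dicksonCoeffOdd L k := by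
  induction L with
  | zero =>
    rintro (_ | k)
    · norm_num [dickson_zero, dicksonCoeffEven_zero_right, dicksonCoeffOdd_zero_zero]
    · norm_num [dickson_zero, dicksonCoeffEven_of_lt, dicksonCoeffOdd_of_lt, coeff_X, coeff_one]
      exact ⟨by rw [← C_ofNat, coeff_C]; simp, by omega⟩
  | succ L ih =>
    have ih0 := ih 0
    simp only [mul_zero, zero_add, add_zero] at ih0
    have heven : ∀ k, (D (2 * (L + 1))).coeff (2 * k) =
          (-1) ^ (L + 1 + k) * dicksonCoeffEven (L + 1) k ∧
        (D (2 * (L + 1))).coeff (2 * k + 1) = 0 := by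
      rintro (_ | k)
      · simp [dickson_two_mul_succ, ih0.1, ih0.2.1, ih0.2.2.1, dicksonCoeffEven_zero_right,
          pow_succ]
      · rw [dickson_two_mul_succ, show 2 * (k + 1) = 2 * k + 1 + 1 by ring, coeff_sub, coeff_sub,
          coeff_X_mul, coeff_X_mul, show 2 * k + 1 + 1 = 2 * (k + 1) by ring, (ih k).2.2.2,
          (ih (k + 1)).1, (ih (k + 1)).2.2.1, (ih (k + 1)).2.1, dicksonCoeffEven_succ_succ]
        push_cast
        constructor <;> ring
    intro k
    refine ⟨(heven k).1, (heven k).2, ?_, ?_⟩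
    · rcases k with _ | k
      · simp [dickson_two_mul_succ_add_one, ih0.2.2.1]
      · rw [dickson_two_mul_succ_add_one, show 2 * (k + 1) = 2 * k + 1 + 1 by ring, coeff_sub,
          coeff_X_mul, (heven k).2, show 2 * k + 1 + 1 = 2 * (k + 1) by ring, (ih (k + 1)).2.2.1,
          sub_zero]
    · rw [dickson_two_mul_succ_add_one]
      simp only [coeff_sub, coeff_X_mul, (heven k).1, (ih k).2.2.2, dicksonCoeffOdd_succ]
      push_cast
      ring

lemma natDegree_dickson_one_one_le : ∀ n : ℕ, (D n).natDegree ≤ n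
  | 0 => by norm_num [dickson_zero]
  | 1 => by simp [dickson_one]
  | n + 2 => by
    rw [dickson_add_two, C_1, one_mul]
    refine (natDegree_sub_le _ _).trans (max_le ?_ ?_)
    · have := natDegree_dickson_one_one_le (n + 1)
      exact natDegree_mul_le.trans (by simp; omega)
    · exact (natDegree_dickson_one_one_le n).trans (by omega)

lemma neg_one_pow_sub_of_le {m n : ℕ} (h : n ≤ m) : (-1 : ℂ) ^ (m - n) = (-1) ^ (m + n) := by
  obtain ⟨d, rfl⟩ := Nat.exists_eq_add_of_le h
  rw [show n + d - n = d by omega, show n + d + n = d + 2 * n by ring, pow_add, pow_mul]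
  simp

lemma bcoef_zero (p : ℕ) (a : ℤ → ℝ) (lam : ℂ) :
    bcoef p a lam 0 =
      (a 0 + lam) + 2 * ∑ l ∈ Icc 1 (p / 2), (-1 : ℂ) ^ l * (a (2 * l) : ℂ) := by
  simp [bcoef]

lemma bcoef_two_mul (p : ℕ) (a : ℤ → ℝ) (lam : ℂ) {k : ℕ} (hk : k ≠ 0) :
    bcoef p a lam (2 * k) = ∑ l ∈ Icc k (p / 2), (-1 : ℂ) ^ (l - k) *
      ((l + k - 1).choose (2 * k - 1) : ℂ) * ((l : ℂ) / k) * (a (2 * l) : ℂ) := by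
  simp [bcoef, hk]

lemma bcoef_two_mul_add_one (p : ℕ) (a : ℤ → ℝ) (lam : ℂ) (k : ℕ) :
    bcoef p a lam (2 * k + 1) = ∑ l ∈ Icc k ((p + 1) / 2 - 1), (-1 : ℂ) ^ (l - k) *
      ((l + k).choose (2 * k) : ℂ) * ((2 * l + 1 : ℂ) / (2 * k + 1)) * (a (2 * l + 1) : ℂ) := by
  simp [bcoef, Nat.add_mod, show (2 * k + 1) / 2 = k by omega]

lemma bcoef_two_mul_succ {M : ℕ} (hM : 1 ≤ M) (a : ℤ → ℝ) (lam : ℂ) (r : ℕ) :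
    bcoef (2 * M + 1) a lam r =
      bcoef (2 * M) a lam r + a ↑(2 * M + 1) * (D (2 * M + 1)).coeff r := by
  obtain ⟨k, rfl | rfl⟩ := Nat.even_or_odd' r
  · rw [(coeff_dickson_one_one M k).2.2.1, mul_zero, add_zero]
    simp only [bcoef, Nat.mul_mod_right, if_true, show (2 * M + 1) / 2 = 2 * M / 2 by omega]
  · rw [bcoef_two_mul_add_one, bcoef_two_mul_add_one, (coeff_dickson_one_one M k).2.2.2,
      show (2 * M + 1 + 1) / 2 - 1 = M - 1 + 1 by omega, show (2 * M + 1) / 2 - 1 = M - 1 by omega]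
    by_cases hk : k ≤ M
    · rw [sum_Icc_succ_top (by omega), Nat.sub_add_cancel hM, neg_one_pow_sub_of_le hk,
        ← natCast_dicksonCoeffOdd hk]
      push_cast
      ring
    · rw [Icc_eq_empty (by omega), Icc_eq_empty (by omega), dicksonCoeffOdd_of_lt (by omega)]
      simp

lemma bcoef_two_mul_add_one_succ (M : ℕ) (a : ℤ → ℝ) (lam : ℂ) (r : ℕ) :
    bcoef (2 * M + 2) a lam r =
      bcoef (2 * M + 1) a lam r + a ↑(2 * M + 2) * (D (2 * M + 2)).coeff r := by
  rw [show 2 * M + 2 = 2 * (M + 1) by ring]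
  obtain ⟨k, rfl | rfl⟩ := Nat.even_or_odd' r
  · rw [(coeff_dickson_one_one (M + 1) k).1]
    rcases Nat.eq_zero_or_pos k with rfl | hk0
    · rw [mul_zero, bcoef_zero, bcoef_zero, show 2 * (M + 1) / 2 = M + 1 by omega,
        show (2 * M + 1) / 2 = M by omega, sum_Icc_succ_top (by omega),
        dicksonCoeffEven_zero_right]
      push_cast
      ring
    · rw [bcoef_two_mul _ _ _ hk0.ne', bcoef_two_mul _ _ _ hk0.ne',
        show 2 * (M + 1) / 2 = M + 1 by omega, show (2 * M + 1) / 2 = M by omega]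
      by_cases hk : k ≤ M + 1
      · rw [sum_Icc_succ_top hk, neg_one_pow_sub_of_le hk, mul_assoc _ _ ((M + 1 : ℕ) / (k : ℂ)),
          mul_comm _ ((M + 1 : ℕ) / (k : ℂ)), natCast_dicksonCoeffEven hk0 hk]
        push_cast
        ring
      · rw [Icc_eq_empty (by omega), Icc_eq_empty (by omega), dicksonCoeffEven_of_lt (by omega)]
        simp
  · rw [(coeff_dickson_one_one (M + 1) k).2.1, mul_zero, add_zero, bcoef_two_mul_add_one,
      bcoef_two_mul_add_one, show (2 * (M + 1) + 1) / 2 - 1 = (2 * M + 1 + 1) / 2 - 1 by omega]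

lemma bcoef_succ {p : ℕ} (hp : 1 ≤ p) (a : ℤ → ℝ) (lam : ℂ) (r : ℕ) :
    bcoef (p + 1) a lam r = bcoef p a lam r + a ↑(p + 1) * (D (p + 1)).coeff r := by
  obtain ⟨M, rfl | rfl⟩ := Nat.even_or_odd' p
  · exact bcoef_two_mul_succ (by omega) a lam r
  · exact bcoef_two_mul_add_one_succ M a lam r

noncomputable def stencilPoly (p : ℕ) (a : ℤ → ℝ) (lam : ℂ) : ℂ[X] :=
  C ((a 0 : ℂ) + lam) + ∑ n ∈ Icc 1 p, C (a n : ℂ) * D n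

lemma bcoef_eq_coeff_stencilPoly {p : ℕ} (hp : 1 ≤ p) (a : ℤ → ℝ) (lam : ℂ) (r : ℕ) :
    bcoef p a lam r = (stencilPoly p a lam).coeff r := by
  induction p, hp using Nat.le_induction generalizing r with
  | base =>
    obtain ⟨k, rfl | rfl⟩ := Nat.even_or_odd' r <;> rcases k with _ | k
    · simp [stencilPoly, bcoef_zero]
    · simp [stencilPoly, bcoef_two_mul, coeff_X, coeff_C]
      omega
    · simp [stencilPoly, bcoef]
    · simp [stencilPoly, bcoef_two_mul_add_one, coeff_C]
  | succ p hp ih =>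
    rw [bcoef_succ hp, ih, stencilPoly, stencilPoly, sum_Icc_succ_top (by omega)]
    simp only [coeff_add, coeff_C_mul]
    ring

lemma natDegree_stencilPoly_le (p : ℕ) (a : ℤ → ℝ) (lam : ℂ) :
    (stencilPoly p a lam).natDegree ≤ p := by
  refine (natDegree_add_le _ _).trans (max_le (by simp) ?_)
  refine natDegree_sum_le_of_forall_le _ _ fun n hn => ?_
  exact natDegree_C_mul_le _ _ |>.trans <|
    (natDegree_dickson_one_one_le n).trans (mem_Icc.mp hn).2

lemma Ppoly_eq_eval_stencilPoly {p : ℕ} (hp : 1 ≤ p) (a : ℤ → ℝ) (lam z : ℂ) :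
    Ppoly p a lam z = (stencilPoly p a lam).eval z := by
  rw [eval_eq_sum_range' (Nat.lt_succ_of_le (natDegree_stencilPoly_le p a lam)), Ppoly]
  simp only [bcoef_eq_coeff_stencilPoly hp]

lemma eval_stencilPoly_add_inv (p : ℕ) (a : ℤ → ℝ) (lam : ℂ) {y : ℂ} (hy : y ≠ 0) :
    (stencilPoly p a lam).eval (y + y⁻¹) =
      (a 0 + lam) + ∑ n ∈ Icc 1 p, (a n : ℂ) * (y ^ n + y⁻¹ ^ n) := by
  simp [stencilPoly, eval_finsetSum, dickson_one_one_eval_add_inv y y⁻¹ (mul_inv_cancel₀ hy)]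

lemma sum_Icc_neg_self {M : Type*} [AddCommMonoid M] (f : ℤ → M) (n : ℕ) :
    ∑ t ∈ Icc (-(n : ℤ)) n, f t = f 0 + ∑ m ∈ Icc 1 n, (f m + f (-m)) := by
  induction n with
  | zero => simp
  | succ n ih =>
    have hIcc : Icc (-((n + 1 : ℕ) : ℤ)) (n + 1 : ℕ) =
        insert (-((n : ℤ) + 1)) (insert ((n : ℤ) + 1) (Icc (-(n : ℤ)) n)) := by
      ext x
      simp only [mem_Icc, mem_insert]
      omega
    rw [hIcc, sum_insert (by simp only [mem_insert, mem_Icc]; omega),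
      sum_insert (by simp only [mem_Icc]; omega), ih, sum_Icc_succ_top (by omega)]
    push_cast
    abel

noncomputable def stencilSymbol (p : ℕ) (a : ℤ → ℝ) (lam u : ℂ) : ℂ :=
  lam + ∑ t ∈ Icc (-(p : ℤ)) p, (a t : ℂ) * u ^ t

lemma Ppoly_add_inv {p : ℕ} (hp : 1 ≤ p) {a : ℤ → ℝ} (hsym : ∀ r, a (-r) = a r) (lam : ℂ)
    {y : ℂ} (hy : y ≠ 0) : Ppoly p a lam (y + y⁻¹) = stencilSymbol p a lam y := by
  rw [Ppoly_eq_eval_stencilPoly hp, eval_stencilPoly_add_inv p a lam hy, stencilSymbol,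
    sum_Icc_neg_self]
  simp only [hsym, zpow_neg, zpow_natCast, zpow_zero, mul_one, inv_pow, mul_add]
  ring

lemma exists_sum_mul_zpow_eq {K ι : Type*} [Field K] [Fintype ι] {w : ι → K}
    (hw : Function.Injective w) (hw0 : ∀ s, w s ≠ 0) (m : ℤ) (b : ℤ → K) :
    ∃ κ : ι → K, ∀ j : ℤ, m ≤ j → j < m + Fintype.card ι → ∑ s, κ s * w s ^ j = b j := by
  classical
  set e := Fintype.equivFin ι
  set V := Matrix.vandermonde (w ∘ e.symm)
  have hV : IsUnit V := (Matrix.isUnit_iff_isUnit_det V).mpr <|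
    isUnit_iff_ne_zero.mpr (Matrix.det_vandermonde_ne_zero_iff.mpr (hw.comp e.symm.injective))
  obtain ⟨u, hu⟩ := Matrix.vecMul_surjective_iff_isUnit.mpr hV fun k => b (m + k)
  -- `u` solves the system for the exponents `0, …, card ι - 1`; the factor `w s ^ (-m)` shifts
  -- them to start at `m`.
  refine ⟨fun s => u (e s) * w s ^ (-m), fun j hmj hj => ?_⟩
  have hk := congrFun hu ⟨(j - m).toNat, by omega⟩
  simp only [Matrix.vecMul, dotProduct, V, Matrix.vandermonde_apply, Function.comp_apply] at hk
  rw [show m + ((j - m).toNat : ℤ) = j by omega, ← e.sum_comp] at hk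
  rw [← hk]
  refine sum_congr rfl fun s _ => ?_
  rw [mul_assoc, ← zpow_natCast, ← zpow_add₀ (hw0 s), Equiv.symm_apply_apply]
  congr 2
  omega

noncomputable def stencilOp (p : ℕ) (a : ℤ → ℝ) (lam : ℂ) : (ℤ → ℂ) →ₗ[ℂ] (ℤ → ℂ) where
  toFun v j := ∑ t ∈ Icc (-(p : ℤ)) p, (a t : ℂ) * v (j + t) + lam * v j
  map_add' v w := by
    ext j
    simp only [Pi.add_apply, mul_add, sum_add_distrib]
    ring
  map_smul' c v := by
    ext j
    simp only [Pi.smul_apply, smul_eq_mul, RingHom.id_apply, mul_add, mul_sum]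
    congr 1
    · exact sum_congr rfl fun _ _ => by ring
    · ring

lemma mem_ker_stencilOp_iff {p : ℕ} {a : ℤ → ℝ} {lam : ℂ} {v : ℤ → ℂ} :
    v ∈ LinearMap.ker (stencilOp p a lam) ↔
      ∀ j : ℤ, ∑ t ∈ Icc (-(p : ℤ)) p, (a t : ℂ) * v (j + t) + lam * v j = 0 := by
  simp [stencilOp, funext_iff]

lemma zpow_mem_ker_stencilOp {p : ℕ} {a : ℤ → ℝ} {lam u : ℂ} (hu : u ≠ 0)
    (h : stencilSymbol p a lam u = 0) :
    (fun j : ℤ => u ^ j) ∈ LinearMap.ker (stencilOp p a lam) := by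
  refine mem_ker_stencilOp_iff.mpr fun j => ?_
  calc ∑ t ∈ Icc (-(p : ℤ)) p, (a t : ℂ) * u ^ (j + t) + lam * u ^ j
      = u ^ j * stencilSymbol p a lam u := by
        rw [stencilSymbol, mul_add, mul_sum, add_comm (u ^ j * lam), mul_comm lam]
        exact congrArg (· + _) (sum_congr rfl fun _ _ => by rw [zpow_add₀ hu]; ring)
    _ = 0 := by rw [h, mul_zero]

lemma comp_neg_mem_ker_stencilOp {p : ℕ} {a : ℤ → ℝ} (hsym : ∀ r, a (-r) = a r) {lam : ℂ}
    {v : ℤ → ℂ} (hv : v ∈ LinearMap.ker (stencilOp p a lam)) :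
    (fun j => v (-j)) ∈ LinearMap.ker (stencilOp p a lam) := by
  refine mem_ker_stencilOp_iff.mpr fun j => ?_
  rw [← mem_ker_stencilOp_iff.mp hv (-j), sum_Icc_neg_self, sum_Icc_neg_self]
  simp only [hsym, add_zero, neg_add, neg_neg]
  congr 2
  exact sum_congr rfl fun _ _ => add_comm _ _

lemma apply_eq_zero_of_mem_ker_stencilOp_of_le {p : ℕ} (hp : 1 ≤ p) {a : ℤ → ℝ} (hap : a p ≠ 0)
    {lam : ℂ} {v : ℤ → ℂ} (hv : v ∈ LinearMap.ker (stencilOp p a lam)) (m : ℤ)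
    (h0 : ∀ j, m ≤ j → j < m + 2 * p → v j = 0) : ∀ j, m ≤ j → v j = 0 := by
  suffices h : ∀ n : ℕ, ∀ j, m ≤ j → j < m + 2 * p + n → v j = 0 from
    fun j hj => h (j - m).toNat j hj (by omega)
  intro n
  induction n with
  | zero => simpa using h0
  | succ n ih =>
    intro j hmj hj
    rcases lt_or_eq_of_le (show j ≤ m + 2 * p + n by push_cast at hj; omega) with hlt | rfl
    · exact ih j hmj hlt
    have hrec := mem_ker_stencilOp_iff.mp hv (m + p + n)
    rw [ih _ (by omega) (by omega), mul_zero, add_zero,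
      sum_eq_single_of_mem (p : ℤ) (by simp only [mem_Icc]; omega) fun t ht htp => by
        rw [mem_Icc] at ht
        rw [ih _ (by omega) (by omega), mul_zero]] at hrec
    rw [show m + 2 * p + n = m + p + n + p by ring]
    exact (mul_eq_zero.mp hrec).resolve_left (by exact_mod_cast hap)

lemma eq_zero_of_mem_ker_stencilOp {p : ℕ} (hp : 1 ≤ p) {a : ℤ → ℝ}
    (hsym : ∀ r, a (-r) = a r) (hap : a p ≠ 0) {lam : ℂ} {v : ℤ → ℂ}
    (hv : v ∈ LinearMap.ker (stencilOp p a lam)) (h0 : ∀ j, -(p : ℤ) ≤ j → j < p → v j = 0) :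
    v = 0 := by
  funext j
  rcases le_or_gt (-(p : ℤ)) j with hj | hj
  · exact apply_eq_zero_of_mem_ker_stencilOp_of_le hp hap hv (-p)
      (fun i h₁ h₂ => h0 i h₁ (by omega)) j hj
  · -- the reflected solution `i ↦ v (-i)` vanishes on `[1 - p, p]`
    simpa using apply_eq_zero_of_mem_ker_stencilOp_of_le hp hap
      (comp_neg_mem_ker_stencilOp hsym hv) (1 - p)
      (fun i h₁ h₂ => h0 (-i) (by omega) (by omega)) (-j) (by omega)

lemma sum_mul_zpow_mem_ker_stencilOp {ι : Type*} [Fintype ι] {p : ℕ} {a : ℤ → ℝ} {lam : ℂ}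
    {u : ι → ℂ} (hu : ∀ s, u s ≠ 0) (h : ∀ s, stencilSymbol p a lam (u s) = 0) (κ : ι → ℂ) :
    (fun j : ℤ => ∑ s, κ s * u s ^ j) ∈ LinearMap.ker (stencilOp p a lam) := by
  convert Submodule.sum_mem _ (t := univ) fun s _ => Submodule.smul_mem _ (κ s)
    (zpow_mem_ker_stencilOp (hu s) (h s)) using 1
  ext j
  simp

lemma ne_inv_of_add_inv_ne_two {K : Type*} [Field K] {y : K} (hy : y ≠ 0) (h₁ : y + y⁻¹ ≠ 2)
    (h₂ : y + y⁻¹ ≠ -2) : y ≠ y⁻¹ := by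
  intro h
  rcases mul_self_eq_one_iff.mp (by rw [← mul_inv_cancel₀ hy, ← h] : y * y = 1) with rfl | rfl
  · norm_num at h₁
  · norm_num at h₂

lemma injective_sum_elim_inv {K ι : Type*} [DivisionRing K] {y : ι → K}
    (hy : Function.Injective fun r => y r + (y r)⁻¹) (hne : ∀ r, y r ≠ (y r)⁻¹) :
    Function.Injective (Sum.elim y fun r => (y r)⁻¹) := by
  have hcross : ∀ r s, y r = (y s)⁻¹ → r = s := fun r s h =>
    hy (by simp only [h, inv_inv, add_comm])
  rintro (r | r) (s | s) h <;>
    simp only [Sum.elim_inl, Sum.elim_inr, Sum.inl.injEq, Sum.inr.injEq, reduceCtorEq] at h ⊢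
  · exact hy (by simp only [h])
  · exact hne r (hcross r s h ▸ h)
  · exact hne s (hcross s r h.symm ▸ h.symm)
  · exact hy (by simp only [inv_inj.mp h])

lemma sum_mul_elim_inv_zpow {ι : Type*} [Fintype ι] (y : ι → ℂ) (κ : ι ⊕ ι → ℂ) (j : ℤ) :
    ∑ s, κ s * Sum.elim y (fun r => (y r)⁻¹) s ^ j =
      ∑ r, (κ (.inl r) * y r ^ j + κ (.inr r) * y r ^ (-j)) := by
  simp [Fintype.sum_sum_type, sum_add_distrib, inv_zpow', zpow_neg]

theorem stmt0_general (p : ℕ) (hp : 1 ≤ p)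
    (a : ℤ → ℝ) (hsym : ∀ r : ℤ, a (-r) = a r) (hap : a p ≠ 0)
    (lam : ℂ) (z : Fin p → ℂ) (hz : Function.Injective z)
    (hroot : ∀ r, Ppoly p a lam (z r) = 0)
    (hz2 : ∀ r, z r ≠ 2) (hz2' : ∀ r, z r ≠ -2)
    (y : Fin p → ℂ) (hy0 : ∀ r, y r ≠ 0) (hyz : ∀ r, y r + (y r)⁻¹ = z r)
    (v : ℤ → ℂ) :
    (∀ j : ℤ, (∑ r ∈ Finset.Icc (-(p : ℤ)) (p : ℤ), (a r : ℂ) * v (j + r)) + lam * v j = 0) ↔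
    (∃ c d : Fin p → ℂ, ∀ j : ℤ,
      v j = ∑ r, (c r * (y r) ^ j + d r * (y r) ^ (-j))) := by
  set w : Fin p ⊕ Fin p → ℂ := Sum.elim y fun r => (y r)⁻¹
  have hw0 : ∀ s, w s ≠ 0 := by rintro (r | r) <;> simp [w, hy0]
  have hw : Function.Injective w := injective_sum_elim_inv (by simpa only [hyz] using hz)
    fun r => ne_inv_of_add_inv_ne_two (hy0 r) (hyz r ▸ hz2 r) (hyz r ▸ hz2' r)
  have hsymb : ∀ s, stencilSymbol p a lam (w s) = 0 := by
    rintro (r | r)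
    · show stencilSymbol p a lam (y r) = 0
      rw [← Ppoly_add_inv hp hsym lam (hy0 r), hyz, hroot]
    · show stencilSymbol p a lam (y r)⁻¹ = 0
      rw [← Ppoly_add_inv hp hsym lam (inv_ne_zero (hy0 r)), inv_inv, add_comm, hyz, hroot]
  rw [← mem_ker_stencilOp_iff]
  constructor
  · intro hv
    obtain ⟨κ, hκ⟩ := exists_sum_mul_zpow_eq hw hw0 (-p) v
    have hvκ := eq_zero_of_mem_ker_stencilOp hp hsym hap
      (sub_mem hv (sum_mul_zpow_mem_ker_stencilOp hw0 hsymb κ)) fun j h₁ h₂ => by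
        simp only [Pi.sub_apply, hκ j h₁ (by simp; omega), sub_self]
    refine ⟨fun r => κ (.inl r), fun r => κ (.inr r), fun j => ?_⟩
    rw [← sum_mul_elim_inv_zpow, ← sub_eq_zero]
    exact congrFun hvκ j
  · rintro ⟨c, d, hcd⟩
    convert sum_mul_zpow_mem_ker_stencilOp hw0 hsymb (Sum.elim c d) using 1
    funext j
    rw [hcd]
    exact (sum_mul_elim_inv_zpow y (Sum.elim c d) j).symm

/-- if `P_p(·;λ)` has `p` distinct roots `z_r ≠ ±2`, and `y_r + y_r⁻¹ = z_r`
with `y_r ≠ 0`, then `v` solves `L_p v + λ v = 0` iff `v` is a linear combination of the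
sequences `(y_r^j)` and `(y_r^{-j})`. -/
theorem stmt0 (p : ℕ) (hp : 1 ≤ p) (h : ℝ) (hh : 0 < h)
    (a : ℤ → ℝ) (hsym : ∀ r : ℤ, a (-r) = a r) (hap : a p ≠ 0)
    (lam : ℂ) (z : Fin p → ℂ) (hz : Function.Injective z)
    (hroot : ∀ r, Ppoly p a lam (z r) = 0)
    (hz2 : ∀ r, z r ≠ 2) (hz2' : ∀ r, z r ≠ -2)
    (y : Fin p → ℂ) (hy0 : ∀ r, y r ≠ 0) (hyz : ∀ r, y r + (y r)⁻¹ = z r)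
    (v : ℤ → ℂ) :
    (∀ j : ℤ, (∑ r ∈ Finset.Icc (-(p : ℤ)) (p : ℤ), (a r : ℂ) * v (j + r)) + lam * v j = 0) ↔
    (∃ c d : Fin p → ℂ, ∀ j : ℤ,
      v j = ∑ r, (c r * (y r) ^ j + d r * (y r) ^ (-j))) :=
  stmt0_general p hp a hsym hap lam z hz hroot hz2 hz2' y hy0 hyz v
end

section
/- Let s, σ ∈ ℂ with s ≠ 0 and s + σ ≠ 0. Suppose U, Φ, Υ : ℝ → ℂ are functions with U twice differentiable on ℝ such that for all x ∈ ℝ: (s + σ) Φ(x) = −U′(x), (s + σ) Υ(x) = −σ² Φ′(x), and s² U(x) − U″(x) = Υ(x) + 2σ Φ′(x). Then the auxiliary variables can be eliminated and U satisfies the stretched Helmholtz-type equation s² U(x) = (1 + σ/s)^{−2} U″(x) for all x ∈ ℝ. -/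
/-! Differentiating `(s + σ) Φ = -U′` gives `(s + σ) Φ′ = -U″` (Mathlib's `deriv`
commutes with constant multiples and negation for arbitrary functions).
Substituting `Φ′` and `Υ` into the wave equation leaves `s² U = (1 - σ/(s + σ))² U″`, and
`1 - σ/(s + σ) = (1 + σ/s)⁻¹`. -/

theorem deriv_eq_neg_of_const_mul_eq_neg {𝕜 𝕜' : Type*} [NontriviallyNormedField 𝕜]
    [NormedField 𝕜'] [NormedAlgebra 𝕜 𝕜'] {c : 𝕜'} {Φ f : 𝕜 → 𝕜'}
    (h : ∀ x, c * Φ x = -f x) (x : 𝕜) : c * deriv Φ x = -deriv f x := by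
  rw [← deriv_const_mul_field, funext h]
  exact deriv.neg

theorem helmholtz_of_pml_eliminated {s σ U U'' Φ' Υ : ℂ} (hs : s ≠ 0) (hsσ : s + σ ≠ 0)
    (hΦ' : (s + σ) * Φ' = -U'') (hΥ : (s + σ) * Υ = -σ ^ 2 * Φ')
    (hwave : s ^ 2 * U - U'' = Υ + 2 * σ * Φ') :
    s ^ 2 * U = ((1 + σ / s) ^ 2)⁻¹ * U'' := by
  have hstretch : 1 + σ / s = (s + σ) / s := by field_simp
  rw [hstretch, ← inv_pow, inv_div, div_pow, div_mul_eq_mul_div, eq_div_iff (pow_ne_zero 2 hsσ)]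
  linear_combination (s + σ) ^ 2 * hwave + (s + σ) * hΥ + (2 * σ * (s + σ) - σ ^ 2) * hΦ'

theorem stmt19_general (s σ : ℂ) (hs : s ≠ 0) (hsσ : s + σ ≠ 0)
    (U Φ Υ : ℝ → ℂ)
    (hΦ : ∀ x : ℝ, (s + σ) * Φ x = -deriv U x)
    (hΥ : ∀ x : ℝ, (s + σ) * Υ x = -σ ^ 2 * deriv Φ x)
    (hwave : ∀ x : ℝ, s ^ 2 * U x - deriv (deriv U) x = Υ x + 2 * σ * deriv Φ x) :
    ∀ x : ℝ, s ^ 2 * U x = ((1 + σ / s) ^ 2)⁻¹ * deriv (deriv U) x := fun x =>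
  helmholtz_of_pml_eliminated hs hsσ (deriv_eq_neg_of_const_mul_eq_neg hΦ x) (hΥ x) (hwave x)

/-- elimination of the auxiliary variables in the Laplace-transformed
continuous-limit RDPML system, yielding the stretched Helmholtz-type equation
`s² U = (1 + σ/s)⁻² U″`. -/
theorem stmt19 (s σ : ℂ) (hs : s ≠ 0) (hsσ : s + σ ≠ 0)
    (U Φ Υ : ℝ → ℂ)
    (hU1 : Differentiable ℝ U) (hU2 : Differentiable ℝ (deriv U))
    (hΦ : ∀ x : ℝ, (s + σ) * Φ x = -deriv U x)
    (hΥ : ∀ x : ℝ, (s + σ) * Υ x = -σ ^ 2 * deriv Φ x)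
    (hwave : ∀ x : ℝ, s ^ 2 * U x - deriv (deriv U) x = Υ x + 2 * σ * deriv Φ x) :
    ∀ x : ℝ, s ^ 2 * U x = ((1 + σ / s) ^ 2)⁻¹ * deriv (deriv U) x :=
  stmt19_general s σ hs hsσ U Φ Υ hΦ hΥ hwave
end
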